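/- arXiv:1112.3231 — 3 statements merged into one kernel-verified Lean document; each statement's English description precedes it below -/
import Mathlib

section
/- For every integer n ≥ 1 there exists ε* > 0 such that for all ε ∈ (0, ε*): along any unit-speed geodesic s ↦ (θ(s), φ(s)) of the sectoral harmonic surface of degree n, the function θ cannot attain an interior local maximum at a point s₀ with θ(s₀) ∈ (0, π/2), nor an interior local minimum at a point s₀ with θ(s₀) ∈ (π/2, π). (Paper's Lemma 1: along a geodesic, θ cannot attain a maximum/minimum in the northern/southern hemisphere respectively, at least for moderate values of ε.) -/
noncomputable section
open Real Set

/-- Partial derivative with respect to the first argument (θ). -/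
def pθ (f : ℝ → ℝ → ℝ) (t p : ℝ) : ℝ := deriv (fun x => f x p) t

/-- Partial derivative with respect to the second argument (φ). -/
def pφ (f : ℝ → ℝ → ℝ) (t p : ℝ) : ℝ := deriv (fun x => f t x) p

/-- Metric coefficient g_θθ = r_θ² + r² of the surface in polar form r = r(θ,φ). -/
def gθθ (r : ℝ → ℝ → ℝ) (t p : ℝ) : ℝ := (pθ r t p) ^ 2 + (r t p) ^ 2

/-- Metric coefficient g_θφ = g_φθ = r_θ r_φ. -/
def gθφ (r : ℝ → ℝ → ℝ) (t p : ℝ) : ℝ := pθ r t p * pφ r t p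

/-- Metric coefficient g_φφ = r_φ² + r² sin²θ. -/
def gφφ (r : ℝ → ℝ → ℝ) (t p : ℝ) : ℝ := (pφ r t p) ^ 2 + (r t p) ^ 2 * (sin t) ^ 2

/-- Determinant of the first fundamental form. -/
def gdet (r : ℝ → ℝ → ℝ) (t p : ℝ) : ℝ := gθθ r t p * gφφ r t p - (gθφ r t p) ^ 2

/-- Christoffel symbol Γ^θ_{θθ}, computed from Γ^a_{bc} = ½ g^{ad}(∂_c g_{bd} + ∂_b g_{cd} − ∂_d g_{bc})
with the explicit inverse of the 2×2 metric. -/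
def Γθθθ (r : ℝ → ℝ → ℝ) (t p : ℝ) : ℝ :=
  (1 / 2) * ((gφφ r t p / gdet r t p) * pθ (gθθ r) t p
    + (-(gθφ r t p) / gdet r t p) * (2 * pθ (gθφ r) t p - pφ (gθθ r) t p))

/-- Christoffel symbol Γ^θ_{θφ} = Γ^θ_{φθ}. -/
def Γθθφ (r : ℝ → ℝ → ℝ) (t p : ℝ) : ℝ :=
  (1 / 2) * ((gφφ r t p / gdet r t p) * pφ (gθθ r) t p
    + (-(gθφ r t p) / gdet r t p) * pθ (gφφ r) t p)

/-- Christoffel symbol Γ^θ_{φφ}. -/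
def Γθφφ (r : ℝ → ℝ → ℝ) (t p : ℝ) : ℝ :=
  (1 / 2) * ((gφφ r t p / gdet r t p) * (2 * pφ (gθφ r) t p - pθ (gφφ r) t p)
    + (-(gθφ r t p) / gdet r t p) * pφ (gφφ r) t p)

/-- Christoffel symbol Γ^φ_{θθ}. -/
def Γφθθ (r : ℝ → ℝ → ℝ) (t p : ℝ) : ℝ :=
  (1 / 2) * ((-(gθφ r t p) / gdet r t p) * pθ (gθθ r) t p
    + (gθθ r t p / gdet r t p) * (2 * pθ (gθφ r) t p - pφ (gθθ r) t p))

/-- Christoffel symbol Γ^φ_{θφ} = Γ^φ_{φθ}. -/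
def Γφθφ (r : ℝ → ℝ → ℝ) (t p : ℝ) : ℝ :=
  (1 / 2) * ((-(gθφ r t p) / gdet r t p) * pφ (gθθ r) t p
    + (gθθ r t p / gdet r t p) * pθ (gφφ r) t p)

/-- Christoffel symbol Γ^φ_{φφ}. -/
def Γφφφ (r : ℝ → ℝ → ℝ) (t p : ℝ) : ℝ :=
  (1 / 2) * ((-(gθφ r t p) / gdet r t p) * (2 * pφ (gθφ r) t p - pθ (gφφ r) t p)
    + (gθθ r t p / gdet r t p) * pφ (gφφ r) t p)

/-- `r` is a smooth positive function on (0,π) × ℝ. -/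
def SmoothPolar (r : ℝ → ℝ → ℝ) : Prop :=
  ContDiffOn ℝ (⊤ : ℕ∞) (fun q : ℝ × ℝ => r q.1 q.2) (Ioo 0 π ×ˢ univ) ∧
  ∀ t ∈ Ioo 0 π, ∀ p : ℝ, 0 < r t p

/-- The two geodesic equations at parameter value `s` for the curve `(θ, φ)` on the
surface in polar form `r = r(θ,φ)`. -/
def GeodesicEq (r : ℝ → ℝ → ℝ) (θ φ : ℝ → ℝ) (s : ℝ) : Prop :=
  deriv (deriv θ) s + Γθθθ r (θ s) (φ s) * (deriv θ s) ^ 2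
    + 2 * Γθθφ r (θ s) (φ s) * deriv θ s * deriv φ s
    + Γθφφ r (θ s) (φ s) * (deriv φ s) ^ 2 = 0 ∧
  deriv (deriv φ) s + Γφθθ r (θ s) (φ s) * (deriv θ s) ^ 2
    + 2 * Γφθφ r (θ s) (φ s) * deriv θ s * deriv φ s
    + Γφφφ r (θ s) (φ s) * (deriv φ s) ^ 2 = 0

/-- Unit-speed condition g_θθ θ'² + 2 g_θφ θ'φ' + g_φφ φ'² = 1. -/
def UnitSpeed (r : ℝ → ℝ → ℝ) (θ φ : ℝ → ℝ) (s : ℝ) : Prop :=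
  gθθ r (θ s) (φ s) * (deriv θ s) ^ 2
    + 2 * gθφ r (θ s) (φ s) * deriv θ s * deriv φ s
    + gφφ r (θ s) (φ s) * (deriv φ s) ^ 2 = 1

/-- The sectoral harmonic surface of degree `n`: r(θ,φ) = 1 + ε sinⁿθ cos(nφ). -/
def secR (n : ℕ) (ε : ℝ) (t p : ℝ) : ℝ := 1 + ε * (sin t) ^ n * cos (n * p)

set_option maxHeartbeats 1000000


open Filter Topology in
lemma no_localMax (a b s₀ : ℝ) (θ : ℝ → ℝ) (hs₀ : s₀ ∈ Ioo a b)
    (hC : ContDiffOn ℝ 2 θ (Ioo a b)) (hpos : 0 < deriv (deriv θ) s₀) :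
    ¬ IsLocalMax θ s₀ := by
  intro hmax
  have hopen : IsOpen (Ioo a b) := isOpen_Ioo
  have hC1 : ContDiffOn ℝ 1 (deriv θ) (Ioo a b) := by
    apply hC.deriv_of_isOpen hopen
    norm_num
  have hg : DifferentiableAt ℝ (deriv θ) s₀ :=
    ((hC1.differentiableOn one_ne_zero).differentiableAt (hopen.mem_nhds hs₀))
  have hd : HasDerivAt (deriv θ) (deriv (deriv θ) s₀) s₀ := hg.hasDerivAt
  have h0 : deriv θ s₀ = 0 := hmax.deriv_eq_zero
  have h1 : ∀ᶠ s in 𝓝[≠] s₀, 0 < slope (deriv θ) s₀ s :=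
    (hasDerivAt_iff_tendsto_slope.mp hd).eventually (eventually_gt_nhds hpos)
  have h2 : ∀ᶠ s in 𝓝[>] s₀, 0 < slope (deriv θ) s₀ s :=
    h1.filter_mono (nhdsWithin_mono _ fun x hx => ne_of_gt hx)
  have h3 : ∀ᶠ s in 𝓝[>] s₀, 0 < deriv θ s := by
    filter_upwards [h2, self_mem_nhdsWithin] with s hs hs'
    rw [slope_def_field, h0, sub_zero] at hs
    have hgt : (0:ℝ) < s - s₀ := sub_pos.mpr hs'
    have := (lt_div_iff₀ hgt).mp hs
    linarith
  have h4 : ∀ᶠ s in 𝓝[>] s₀, s ∈ Ioo a b :=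
    ((hopen.eventually_mem hs₀).filter_mono nhdsWithin_le_nhds)
  have h5 : ∀ᶠ s in 𝓝[>] s₀, θ s ≤ θ s₀ := hmax.filter_mono nhdsWithin_le_nhds
  obtain ⟨u, hu, hsub⟩ := (nhdsGT_basis s₀).eventually_iff.mp ((h3.and h4).and h5)
  set s₁ := (s₀ + u) / 2 with hs₁def
  have hs₁ : s₁ ∈ Ioo s₀ u := by constructor <;> (simp [hs₁def]; linarith)
  have hIccsub : Icc s₀ s₁ ⊆ Ioo a b := by
    intro x hx
    rcases eq_or_lt_of_le hx.1 with h | h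
    · exact h ▸ hs₀
    · exact (hsub ⟨h, lt_of_le_of_lt hx.2 hs₁.2⟩).1.2
  have hmono : StrictMonoOn θ (Icc s₀ s₁) := by
    apply strictMonoOn_of_deriv_pos (convex_Icc _ _)
    · exact hC.continuousOn.mono hIccsub
    · intro x hx
      rw [interior_Icc] at hx
      exact (hsub ⟨hx.1, lt_trans hx.2 hs₁.2⟩).1.1
  have hlt : θ s₀ < θ s₁ :=
    hmono (left_mem_Icc.mpr hs₁.1.le) (right_mem_Icc.mpr hs₁.1.le) hs₁.1
  have hle : θ s₁ ≤ θ s₀ := (hsub hs₁).2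
  linarith

lemma no_localMin (a b s₀ : ℝ) (θ : ℝ → ℝ) (hs₀ : s₀ ∈ Ioo a b)
    (hC : ContDiffOn ℝ 2 θ (Ioo a b)) (hneg : deriv (deriv θ) s₀ < 0) :
    ¬ IsLocalMin θ s₀ := by
  intro hmin
  apply no_localMax a b s₀ (fun s => -θ s) hs₀ (hC.neg)
  · have e1 : deriv (fun s => -θ s) = fun s => -deriv θ s := funext fun s => deriv.neg
    rw [e1]
    have e2 : deriv (fun s => -deriv θ s) s₀ = -(deriv (deriv θ) s₀) := deriv.neg
    rw [e2]; linarith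
  · exact hmin.neg

lemma hasDerivAt_sin_pow (n : ℕ) (t : ℝ) :
    HasDerivAt (fun x : ℝ => sin x ^ n) ((n : ℝ) * sin t ^ (n - 1) * cos t) t :=
  (Real.hasDerivAt_sin t).pow n

lemma hasDerivAt_cos_nx (n : ℕ) (p : ℝ) :
    HasDerivAt (fun y : ℝ => cos ((n : ℝ) * y)) (-((n:ℝ) * sin ((n:ℝ) * p))) p := by
  have h : HasDerivAt (fun y : ℝ => (n : ℝ) * y) (n : ℝ) p := by
    simpa using (hasDerivAt_id p).const_mul (n:ℝ)
  simpa [Function.comp_def, mul_comm] using (Real.hasDerivAt_cos ((n:ℝ) * p)).comp p h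

lemma hasDerivAt_sin_nx (n : ℕ) (p : ℝ) :
    HasDerivAt (fun y : ℝ => sin ((n : ℝ) * y)) ((n:ℝ) * cos ((n:ℝ) * p)) p := by
  have h : HasDerivAt (fun y : ℝ => (n : ℝ) * y) (n : ℝ) p := by
    simpa using (hasDerivAt_id p).const_mul (n:ℝ)
  simpa [Function.comp_def, mul_comm] using (Real.hasDerivAt_sin ((n:ℝ) * p)).comp p h

lemma hasDerivAt_secR_t (n : ℕ) (ε t p : ℝ) :
    HasDerivAt (fun x => secR n ε x p)
      (ε * ((n : ℝ) * sin t ^ (n-1) * cos t) * cos ((n:ℝ) * p)) t := by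
  simpa [secR] using (((hasDerivAt_sin_pow n t).const_mul ε).mul_const (cos ((n:ℝ)*p))).const_add 1

lemma hasDerivAt_secR_p (n : ℕ) (ε t p : ℝ) :
    HasDerivAt (fun y => secR n ε t y)
      (-(ε * sin t ^ n * ((n:ℝ) * sin ((n:ℝ) * p)))) p := by
  have := (hasDerivAt_cos_nx n p).const_mul (ε * sin t ^ n)
  simpa [secR, mul_assoc] using this.const_add 1

lemma pθ_secR (n : ℕ) (ε t p : ℝ) :
    pθ (secR n ε) t p = ε * ((n : ℝ) * sin t ^ (n-1) * cos t) * cos ((n:ℝ) * p) :=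
  (hasDerivAt_secR_t n ε t p).deriv

lemma pφ_secR (n : ℕ) (ε t p : ℝ) :
    pφ (secR n ε) t p = -(ε * sin t ^ n * ((n:ℝ) * sin ((n:ℝ) * p))) :=
  (hasDerivAt_secR_p n ε t p).deriv

lemma pθ_gφφ (n : ℕ) (ε t p : ℝ) :
    pθ (gφφ (secR n ε)) t p =
      2*ε^2*(n:ℝ)^3*sin t^n*sin t^(n-1)*cos t*sin ((n:ℝ)*p)^2
      + 2*(secR n ε t p)*ε*(n:ℝ)*sin t^(n-1)*cos t*cos ((n:ℝ)*p)*sin t^2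
      + 2*(secR n ε t p)^2*sin t*cos t := by
  have hfun : (fun x => gφφ (secR n ε) x p) =
      fun x => (ε * sin x ^ n * ((n:ℝ) * sin ((n:ℝ)*p)))^2 + (secR n ε x p)^2 * sin x ^ 2 := by
    funext x
    simp only [gφφ, pφ_secR]
    ring
  have h1 : HasDerivAt (fun x => ε * sin x ^ n * ((n:ℝ) * sin ((n:ℝ)*p)))
      ((ε * ((n:ℝ) * sin t ^ (n-1) * cos t)) * ((n:ℝ) * sin ((n:ℝ)*p))) t :=
    ((hasDerivAt_sin_pow n t).const_mul ε).mul_const _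
  have H := ((h1.pow 2).add (((hasDerivAt_secR_t n ε t p).pow 2).mul (hasDerivAt_sin_pow 2 t)))
  rw [pθ, hfun]
  refine H.deriv.trans ?_
  simp only [Pi.pow_apply, Pi.neg_apply, Nat.cast_ofNat]
  ring

lemma pφ_gθφ (n : ℕ) (ε t p : ℝ) :
    pφ (gθφ (secR n ε)) t p =
      ε^2*(n:ℝ)^3*sin t^(n-1)*sin t^n*cos t*(sin ((n:ℝ)*p)^2 - cos ((n:ℝ)*p)^2) := by
  have hfun : (fun y => gθφ (secR n ε) t y) =
      fun y => ((ε * ((n:ℝ) * sin t ^ (n-1) * cos t)) * cos ((n:ℝ)*y))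
        * (-((ε * sin t ^ n * (n:ℝ)) * sin ((n:ℝ)*y))) := by
    funext y
    simp only [gθφ, pθ_secR, pφ_secR]
    ring
  have H := ((hasDerivAt_cos_nx n p).const_mul (ε * ((n:ℝ) * sin t ^ (n-1) * cos t))).mul
    (((hasDerivAt_sin_nx n p).const_mul (ε * sin t ^ n * (n:ℝ))).neg)
  rw [pφ, hfun]
  refine H.deriv.trans ?_
  simp only [Pi.pow_apply, Pi.neg_apply, Nat.cast_ofNat]
  ring

lemma pφ_gφφ (n : ℕ) (ε t p : ℝ) :
    pφ (gφφ (secR n ε)) t p =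
      2*ε^2*(n:ℝ)^3*(sin t^n)^2*cos ((n:ℝ)*p)*sin ((n:ℝ)*p)
      - 2*(secR n ε t p)*ε*(n:ℝ)*sin t^n*sin ((n:ℝ)*p)*sin t^2 := by
  have hfun : (fun y => gφφ (secR n ε) t y) =
      fun y => ((ε * sin t ^ n * (n:ℝ)) * sin ((n:ℝ)*y))^2 + (secR n ε t y)^2 * sin t ^ 2 := by
    funext y
    simp only [gφφ, pφ_secR]
    ring
  have H := ((((hasDerivAt_sin_nx n p).const_mul (ε * sin t ^ n * (n:ℝ))).pow 2).add
    (((hasDerivAt_secR_p n ε t p).pow 2).mul_const (sin t ^ 2)))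
  rw [pφ, hfun]
  refine H.deriv.trans ?_
  simp only [Pi.pow_apply, Pi.neg_apply, Nat.cast_ofNat]
  ring

lemma keyM (e nn w u A B R : ℝ) (hnn : 1 ≤ nn) (hu : 0 < u) (hu1 : u ≤ 1)
    (hw0 : 0 ≤ w) (hw1 : w ≤ 1) (hA : -1 ≤ A) (hA1 : A ≤ 1) (hB : -1 ≤ B) (hB1 : B ≤ 1)
    (he0 : 0 < e) (he : e * nn^5 ≤ 1/400) (hR1 : 1/2 ≤ R) (hR2 : R ≤ 3/2) :
    -((e^2*nn^2*w^2*u^2*B^2 + R^2*u^2) * (R^2 + R*e*nn*w*u*A + e^2*nn^3*w^2*A^2))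
      + e^4*nn^5*w^4*u^2*A^2*B^2 - R*e^3*nn^3*w^3*u^3*A*B^2 < 0 := by
  have hmaster : ∀ G : ℝ, G = e^2*nn^2*w^2*u^2*B^2 + R^2*u^2 →
      -(G * (R^2 + R*e*nn*w*u*A + e^2*nn^3*w^2*A^2))
        + e^4*nn^5*w^4*u^2*A^2*B^2 - R*e^3*nn^3*w^3*u^3*A*B^2 < 0 := by
    intro G hGdef
    have hnn0 : (0:ℝ) < nn := lt_of_lt_of_le one_pos hnn
    have hnn5 : (1:ℝ) ≤ nn^5 := one_le_pow₀ hnn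
    have hnn3 : nn ≤ nn^3 := by nlinarith
    have hnn35 : nn^3 ≤ nn^5 := by nlinarith
    have he1 : e ≤ 1/400 := by nlinarith
    have he1' : e ≤ 1 := by linarith
    have hA2 : A^2 ≤ 1 := by nlinarith
    have hB2 : B^2 ≤ 1 := by nlinarith
    have hA20 : 0 ≤ A^2 := sq_nonneg A
    have hB20 : 0 ≤ B^2 := sq_nonneg B
    have hw2 : w^2 ≤ 1 := pow_le_one₀ hw0 hw1
    have hw3 : w^3 ≤ 1 := pow_le_one₀ hw0 hw1
    have hw4 : w^4 ≤ 1 := pow_le_one₀ hw0 hw1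
    have he2 : e^2 ≤ 1 := pow_le_one₀ he0.le he1'
    have he3 : e^3 ≤ 1 := pow_le_one₀ he0.le he1'
    have hG0 : 0 ≤ G := by rw [hGdef]; positivity
    have hu2 : (0:ℝ) < u^2 := by positivity
    have hR20 : (1/4 : ℝ) ≤ R^2 := by nlinarith
    have hR29 : R^2 ≤ 9/4 := by nlinarith
    have hG1 : R^2*u^2 ≤ G := by rw [hGdef]; nlinarith [sq_nonneg (e*nn*w*u*B)]
    -- upper bound on G
    have k0 : e^2*w^2*B^2 ≤ 1 := mul_le_one₀ (mul_le_one₀ he2 (sq_nonneg w) hw2) hB20 hB2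
    have hG2 : G ≤ u^2*(nn^2 + 9/4) := by
      have h1 : e^2*w^2*B^2*(nn^2*u^2) ≤ nn^2*u^2 := mul_le_of_le_one_left (by positivity) k0
      have h2 : R^2*u^2 ≤ (9/4)*u^2 := mul_le_mul_of_nonneg_right hR29 (sq_nonneg u)
      rw [hGdef]; nlinarith [h1, h2]
    -- main term: G*R^2 ≥ u^2/16
    have hmain : u^2*(1/16) ≤ G*R^2 := by
      have h1 : (R^2*u^2)*R^2 ≤ G*R^2 := mul_le_mul_of_nonneg_right hG1 (sq_nonneg R)
      nlinarith [h1, sq_nonneg u]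
    -- aux1 : e^4 term
    have k1 : e^3*w^4*A^2*B^2 ≤ 1 :=
      mul_le_one₀ (mul_le_one₀ (mul_le_one₀ he3 (by positivity) hw4) hA20 hA2) hB20 hB2
    have aux1 : e^4*nn^5*w^4*u^2*A^2*B^2 ≤ e*nn^5*u^2 := by
      have := mul_le_of_le_one_left (show (0:ℝ) ≤ e*nn^5*u^2 by positivity) k1
      nlinarith [this]
    -- aux2 : -T4 ≤ 2 e nn^3 u^2
    have k2 : e^2*w^3*u*(-A)*B^2 ≤ 1 := by
      rcases le_or_gt A 0 with hc | hc
      · exact mul_le_one₀ (mul_le_one₀ (mul_le_one₀ (mul_le_one₀ he2 (pow_nonneg hw0 3) hw3) hu.le hu1)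
          (by linarith) (by linarith)) hB20 hB2
      · have : 0 ≤ e^2*w^3*u*B^2 := by positivity
        nlinarith [this]
    have aux2 : -(R*e^3*nn^3*w^3*u^3*A*B^2) ≤ 2*(e*nn^3*u^2) := by
      have f1 : e^2*w^3*u*(-A)*B^2 * (R*e*nn^3*u^2) ≤ R*e*nn^3*u^2 :=
        mul_le_of_le_one_left (by positivity) k2
      have f2 : R*(e*nn^3*u^2) ≤ (3/2)*(e*nn^3*u^2) :=
        mul_le_mul_of_nonneg_right hR2 (by positivity)
      nlinarith [f1, f2, show (0:ℝ) ≤ e*nn^3*u^2 by positivity]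
    -- aux3 : -G*(R e nn w u A) ≤ 5 e nn^3 u^2
    have aux3 : -(G*(R*e*nn*w*u*A)) ≤ 5*(e*nn^3*u^2) := by
      have hGn : 0 ≤ G*R*e*nn := by
        apply mul_nonneg (mul_nonneg (mul_nonneg hG0 (by linarith)) he0.le) hnn0.le
      have f1 : (G*R*e*nn*(w*u))*(-A) ≤ G*R*e*nn*(w*u) :=
        mul_le_of_le_one_right (mul_nonneg hGn (mul_nonneg hw0 hu.le)) (by linarith)
      have f2 : (G*R*e*nn)*(w*u) ≤ G*R*e*nn :=
        mul_le_of_le_one_right hGn (mul_le_one₀ hw1 hu.le hu1)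
      have f3 : G*R ≤ (u^2*(nn^2+9/4))*(3/2) :=
        mul_le_mul hG2 hR2 (by linarith) (by positivity)
      have f4 : G*R*(e*nn) ≤ (u^2*(nn^2+9/4))*(3/2)*(e*nn) :=
        mul_le_mul_of_nonneg_right f3 (by positivity)
      have f5 : (u^2*(nn^2+9/4))*(3/2)*(e*nn) ≤ 5*(e*nn^3*u^2) := by
        have h6 : (0:ℝ) ≤ 7/2*nn^3 - 27/8*nn := by linarith [hnn3]
        have h7 : 0 ≤ (e*u^2)*(7/2*nn^3 - 27/8*nn) := mul_nonneg (by positivity) h6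
        linarith [h7]
      linarith [f1, f2, f4, f5]
    -- aux4 : middle term nonneg
    have aux4 : 0 ≤ G*(e^2*nn^3*w^2*A^2) := mul_nonneg hG0 (by positivity)
    -- combine
    have c1 : e*nn^3*u^2 ≤ e*nn^5*u^2 :=
      mul_le_mul_of_nonneg_right (mul_le_mul_of_nonneg_left hnn35 he0.le) (sq_nonneg u)
    have c2 : e*nn^5*u^2 ≤ (1/400)*u^2 := mul_le_mul_of_nonneg_right he (sq_nonneg u)
    linarith [hmain, aux1, aux2, aux3, aux4, c1, c2, hu2]

  exact hmaster _ rfl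


lemma keySign (n : ℕ) (hn : 1 ≤ n) (ε : ℝ) (hε0 : 0 < ε) (hε : ε * (n:ℝ)^5 ≤ 1/400)
    (t p : ℝ) (ht0 : 0 < t) (htπ : t < π) :
    0 < gφφ (secR n ε) t p ∧
    (0 < cos t → Γθφφ (secR n ε) t p < 0) ∧
    (cos t < 0 → 0 < Γθφφ (secR n ε) t p) := by
  have hu : 0 < sin t := sin_pos_of_pos_of_lt_pi ht0 htπ
  have hu1 : sin t ≤ 1 := sin_le_one t
  have hnn : (1:ℝ) ≤ (n:ℝ) := by exact_mod_cast hn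
  have hnn5 : (1:ℝ) ≤ (n:ℝ)^5 := one_le_pow₀ hnn
  have hε1 : ε ≤ 1/400 := by nlinarith
  have hsn : sin t ^ n = sin t ^ (n-1) * sin t := by
    conv_lhs => rw [show n = (n-1)+1 by omega, pow_succ]
  have hw0 : 0 ≤ sin t ^ (n-1) := pow_nonneg hu.le _
  have hw1 : sin t ^ (n-1) ≤ 1 := pow_le_one₀ hu.le hu1
  have hm0 : 0 ≤ sin t ^ n := pow_nonneg hu.le _
  have hm1 : sin t ^ n ≤ 1 := pow_le_one₀ hu.le hu1
  have hA1 : cos ((n:ℝ)*p) ≤ 1 := cos_le_one _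
  have hA0 : -1 ≤ cos ((n:ℝ)*p) := neg_one_le_cos _
  have hB1 : sin ((n:ℝ)*p) ≤ 1 := sin_le_one _
  have hB0 : -1 ≤ sin ((n:ℝ)*p) := neg_one_le_sin _
  -- bounds on R
  have hc1 : 0 ≤ ε * sin t ^ n + ε * sin t ^ n * cos ((n:ℝ)*p) := by
    have := mul_nonneg (mul_nonneg hε0.le hm0) (by linarith : (0:ℝ) ≤ 1 + cos ((n:ℝ)*p))
    nlinarith [this]
  have hc2 : ε * sin t ^ n * cos ((n:ℝ)*p) ≤ ε * sin t ^ n := by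
    nlinarith [mul_nonneg (mul_nonneg hε0.le hm0) (by linarith : (0:ℝ) ≤ 1 - cos ((n:ℝ)*p))]
  have hc3 : ε * sin t ^ n ≤ ε := mul_le_of_le_one_right hε0.le hm1
  have hR1 : 1/2 ≤ secR n ε t p := by
    rw [secR]; nlinarith [hc1, hc3]
  have hR2 : secR n ε t p ≤ 3/2 := by
    rw [secR]; nlinarith [hc2, hc3]
  have hRpos : 0 < secR n ε t p := by linarith
  -- positivity of gφφ
  have hgφφpos : 0 < gφφ (secR n ε) t p := by
    have h1 : 0 < (secR n ε t p)^2 * (sin t)^2 := mul_pos (pow_pos hRpos 2) (pow_pos hu 2)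
    rw [gφφ]
    nlinarith [sq_nonneg (pφ (secR n ε) t p), h1]
  refine ⟨hgφφpos, ?_⟩
  -- determinant
  have hD : gdet (secR n ε) t p =
      (secR n ε t p)^2 * (ε * sin t ^ n * ((n:ℝ) * sin ((n:ℝ)*p)))^2
      + (sin t)^2 * (secR n ε t p)^2 * (ε * ((n:ℝ) * sin t ^ (n-1) * cos t) * cos ((n:ℝ)*p))^2
      + (secR n ε t p)^4 * (sin t)^2 := by
    rw [gdet, gθθ, gφφ, gθφ, pθ_secR, pφ_secR]
    ring
  have hDpos : 0 < gdet (secR n ε) t p := by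
    rw [hD]
    have h1 : 0 ≤ (secR n ε t p)^2 * (ε * sin t ^ n * ((n:ℝ) * sin ((n:ℝ)*p)))^2 := by positivity
    have h2 : 0 ≤ (sin t)^2 * (secR n ε t p)^2
        * (ε * ((n:ℝ) * sin t ^ (n-1) * cos t) * cos ((n:ℝ)*p))^2 := by positivity
    have h3 : 0 < (secR n ε t p)^4 * (sin t)^2 := mul_pos (pow_pos hRpos 4) (pow_pos hu 2)
    linarith
  -- the M quantity
  set e := ε
  set nr : ℝ := (n:ℝ) with hnr
  set w : ℝ := sin t ^ (n-1) with hw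
  set u : ℝ := sin t with hudef
  set A : ℝ := cos ((n:ℝ)*p) with hA
  set B : ℝ := sin ((n:ℝ)*p) with hB
  set R : ℝ := secR n ε t p with hRd
  set M : ℝ := -((e^2*nr^2*w^2*u^2*B^2 + R^2*u^2) * (R^2 + R*e*nr*w*u*A + e^2*nr^3*w^2*A^2))
      + e^4*nr^5*w^4*u^2*A^2*B^2 - R*e^3*nr^3*w^3*u^3*A*B^2 with hM
  have hMneg : M < 0 := by
    rw [hM]
    exact keyM e nr w u A B R hnn hu hu1 hw0 hw1 hA0 hA1 hB0 hB1 hε0 hε hR1 hR2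
  -- Γθφφ formula
  have hgφφval : gφφ (secR n ε) t p = (e*nr*(w*u)*B)^2 + R^2*u^2 := by
    rw [gφφ, pφ_secR, hsn]; ring
  have hgθφval : gθφ (secR n ε) t p = (e*nr*w*(cos t)*A) * (-(e*nr*(w*u)*B)) := by
    rw [gθφ, pθ_secR, pφ_secR, hsn]; ring
  have hΓeq : Γθφφ (secR n ε) t p = (2*(cos t)*u*M) / (2 * gdet (secR n ε) t p) := by
    have hDne : gdet (secR n ε) t p ≠ 0 := hDpos.ne'
    rw [Γθφφ, pφ_gθφ, pθ_gφφ, pφ_gφφ, hgφφval, hgθφval, hsn, hM, hRd]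
    field_simp
    ring
  constructor
  · intro hcpos
    rw [hΓeq]
    apply div_neg_of_neg_of_pos
    · nlinarith [hMneg, mul_pos hcpos hu]
    · linarith
  · intro hcneg
    rw [hΓeq]
    apply div_pos
    · nlinarith [hMneg, mul_pos (neg_pos.mpr hcneg) hu]
    · linarith

/-- Paper's Lemma 1. For every integer n ≥ 1 there exists ε* > 0 such that
for all ε ∈ (0, ε*): along any unit-speed geodesic of the sectoral harmonic surface of degree n,
θ cannot attain an interior local maximum at a point with θ(s₀) ∈ (0, π/2), nor an interior
local minimum at a point with θ(s₀) ∈ (π/2, π). -/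
theorem statement0 (n : ℕ) (hn : 1 ≤ n) :
    ∃ εstar : ℝ, 0 < εstar ∧ ∀ ε ∈ Ioo (0 : ℝ) εstar,
      ∀ (a b : ℝ) (θ φ : ℝ → ℝ),
        ContDiffOn ℝ 2 θ (Ioo a b) → ContDiffOn ℝ 2 φ (Ioo a b) →
        (∀ s ∈ Ioo a b, θ s ∈ Ioo 0 π) →
        (∀ s ∈ Ioo a b, GeodesicEq (secR n ε) θ φ s) →
        (∀ s ∈ Ioo a b, UnitSpeed (secR n ε) θ φ s) →
        ∀ s₀ ∈ Ioo a b,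
          (θ s₀ ∈ Ioo 0 (π / 2) → ¬ IsLocalMax θ s₀) ∧
          (θ s₀ ∈ Ioo (π / 2) π → ¬ IsLocalMin θ s₀) := by
  have hnn : (1:ℝ) ≤ (n:ℝ) := by exact_mod_cast hn
  have hn5 : (0:ℝ) < 400*(n:ℝ)^5 := by positivity
  refine ⟨1/(400*(n:ℝ)^5), by positivity, ?_⟩
  rintro ε ⟨hε0, hεlt⟩ a b θ φ hθC hφC hrange hgeo hunit s₀ hs₀
  have hε400 : ε * (n:ℝ)^5 ≤ 1/400 := by
    rw [lt_div_iff₀ hn5] at hεlt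
    nlinarith
  have ht := hrange s₀ hs₀
  obtain ⟨hgp, hsgn1, hsgn2⟩ :=
    keySign n hn ε hε0 hε400 (θ s₀) (φ s₀) ht.1 ht.2
  have hmain : ∀ _ : Unit, True := fun _ => trivial
  constructor
  · intro hθN hmax
    have hd0 : deriv θ s₀ = 0 := hmax.deriv_eq_zero
    have hgeo1 := (hgeo s₀ hs₀).1
    rw [hd0] at hgeo1
    have hθ'' : deriv (deriv θ) s₀
        = -(Γθφφ (secR n ε) (θ s₀) (φ s₀) * (deriv φ s₀)^2) := by
      nlinarith [hgeo1]
    have hU := hunit s₀ hs₀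
    rw [UnitSpeed, hd0] at hU
    have hφ2 : 0 < (deriv φ s₀)^2 := by
      nlinarith [hU, hgp, sq_nonneg (deriv φ s₀)]
    have hcpos : 0 < cos (θ s₀) := by
      apply cos_pos_of_mem_Ioo
      constructor
      · linarith [hθN.1, pi_pos]
      · exact hθN.2
    have hΓneg := hsgn1 hcpos
    have hpos : 0 < deriv (deriv θ) s₀ := by
      rw [hθ'']
      nlinarith [mul_neg_of_neg_of_pos hΓneg hφ2]
    exact no_localMax a b s₀ θ hs₀ hθC hpos hmax
  · intro hθS hmin
    have hd0 : deriv θ s₀ = 0 := hmin.deriv_eq_zero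
    have hgeo1 := (hgeo s₀ hs₀).1
    rw [hd0] at hgeo1
    have hθ'' : deriv (deriv θ) s₀
        = -(Γθφφ (secR n ε) (θ s₀) (φ s₀) * (deriv φ s₀)^2) := by
      nlinarith [hgeo1]
    have hU := hunit s₀ hs₀
    rw [UnitSpeed, hd0] at hU
    have hφ2 : 0 < (deriv φ s₀)^2 := by
      nlinarith [hU, hgp, sq_nonneg (deriv φ s₀)]
    have hcneg : cos (θ s₀) < 0 := by
      apply cos_neg_of_pi_div_two_lt_of_lt hθS.1
      linarith [hθS.2, pi_pos]
    have hΓpos := hsgn2 hcneg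
    have hneg : deriv (deriv θ) s₀ < 0 := by
      rw [hθ'']
      nlinarith [mul_pos hΓpos hφ2]
    exact no_localMin a b s₀ θ hs₀ hθC hneg hmin
end
end

section
/- For every N ∈ {4, 6, 12} and every integer n with n ∈ {7, 8, 9, 11} or n ≥ 13: for all f₂, f₃ ∈ {6 + 6e/N : e ∈ ℤ, |e| ≤ N/2} ∩ ℤ, all f₄, f₅ ∈ {6 + 18e/N : e ∈ ℤ, |e| ≤ N/2} ∩ ℤ, and every f_∞ ∈ {6 + (12e/N)·(n+2)/n : e ∈ ℤ, |e| ≤ N/2} ∩ ℤ, the quantity (N/12)·(f_∞ − 12 − f₂ − f₃ − f₄ − f₅) is not a nonnegative integer. -/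
/-!
Since `2|e| ≤ N`, the exponents satisfy `f₂, f₃ ≥ 3` and `f₄, f₅ ≥ -3`, so `12 + f₂ + f₃ + f₄ + f₅ ≥ 12`
and `d ≥ 0` would need an integer `f_∞ ≥ 12`. Writing `f_∞ = 6 + k` and `g = 12e/N`, which is an integer
`≤ 6` because `N ∣ 12`, the definition of `f_∞` reads `k n = g (n + 2)`, i.e. `(k - g) n = 2g ≤ 12`.
For `n ≥ 7` and `k ≥ 6` this forces `k = g + 1` and `n = 2g ∈ {10, 12}`. Hence `f_∞ ≤ 11` and `d < 0`.
-/

theorem neg_half_le_mul_intCast_div_natCast {K : Type*} [Field K] [LinearOrder K]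
    [IsStrictOrderedRing K] {a : K} (ha : 0 ≤ a) {N : ℕ} {e : ℤ} (he : 2 * |e| ≤ (N : ℤ)) :
    -(a / 2) ≤ a * e / N := by
  rcases N.eq_zero_or_pos with rfl | hN
  · simp only [Nat.cast_zero, div_zero]
    linarith
  have he' : -(N : K) ≤ 2 * e := by
    exact_mod_cast (by linarith [neg_abs_le e] : -(N : ℤ) ≤ 2 * e)
  rw [le_div_iff₀ (by exact_mod_cast hN)]
  nlinarith

theorem le_five_of_mul_eq_mul_add_two {k g n : ℤ} (hg : g ≤ 6) (hn : 7 ≤ n) (h10 : n ≠ 10)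
    (h12 : n ≠ 12) (h : k * n = g * (n + 2)) : k ≤ 5 := by
  by_contra! hk
  have hg_pos : 0 < g := by nlinarith
  have hdiff : (k - g) * n = 2 * g := by linear_combination h
  have hdiff_pos : 0 < k - g := by nlinarith
  have hdiff_one : k - g = 1 := by nlinarith
  rw [hdiff_one] at hdiff
  omega

theorem exponent_le_eleven_of_dvd_twelve {N n : ℕ} (hN : N ∣ 12) (hn : 7 ≤ n) (h10 : n ≠ 10)
    (h12 : n ≠ 12) {e z : ℤ} (he : 2 * |e| ≤ (N : ℤ))
    (hz : (z : ℚ) = 6 + (12 * (e : ℚ) / (N : ℚ)) * (((n : ℚ) + 2) / (n : ℚ))) : z ≤ 11 := by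
  obtain ⟨c, hc⟩ := hN
  have hN0 : (N : ℚ) ≠ 0 := by
    rintro h
    norm_cast at h
    simp [h] at hc
  have hn0 : (n : ℚ) ≠ 0 := by norm_cast; omega
  have hcq : (12 : ℚ) = N * c := by exact_mod_cast hc
  have hkey : (z - 6) * (n : ℤ) = (c * e) * (n + 2) := by
    have : ((z : ℚ) - 6) * n = (c * e) * (n + 2) := by
      rw [hz, hcq]
      field_simp
      ring
    exact_mod_cast this
  have hce : (c : ℤ) * e ≤ 6 := by
    have : (c : ℤ) * (2 * e) ≤ c * N := by
      gcongr
      linarith [le_abs_self e]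
    have hcN : (c : ℤ) * N = 12 := by rw [mul_comm]; exact_mod_cast hc.symm
    linarith
  have := le_five_of_mul_eq_mul_add_two hce (by exact_mod_cast hn) (by exact_mod_cast h10)
    (by exact_mod_cast h12) hkey
  linarith

theorem statement5_general (N n : ℕ) (hN : N ∈ ({4, 6, 12} : Set ℕ))
    (hn : n ∈ ({7, 8, 9, 11} : Set ℕ) ∨ 13 ≤ n)
    (f₂ f₃ f₄ f₅ finf : ℚ)
    (h2 : ∃ e : ℤ, 2 * |e| ≤ (N : ℤ) ∧ f₂ = 6 + 6 * (e : ℚ) / (N : ℚ))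
    (h3 : ∃ e : ℤ, 2 * |e| ≤ (N : ℤ) ∧ f₃ = 6 + 6 * (e : ℚ) / (N : ℚ))
    (h4 : ∃ e : ℤ, 2 * |e| ≤ (N : ℤ) ∧ f₄ = 6 + 18 * (e : ℚ) / (N : ℚ))
    (h5 : ∃ e : ℤ, 2 * |e| ≤ (N : ℤ) ∧ f₅ = 6 + 18 * (e : ℚ) / (N : ℚ))
    (hinf : ∃ e : ℤ, 2 * |e| ≤ (N : ℤ) ∧
      finf = 6 + (12 * (e : ℚ) / (N : ℚ)) * (((n : ℚ) + 2) / (n : ℚ)))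
    (hinfz : ∃ z : ℤ, finf = (z : ℚ)) :
    ¬ ∃ m : ℕ, ((N : ℚ) / 12) * (finf - 12 - f₂ - f₃ - f₄ - f₅) = (m : ℚ) := by
  rintro ⟨m, hm⟩
  have hNdvd : N ∣ 12 := by
    rcases hN with rfl | rfl | rfl <;> norm_num
  have hNpos : (0 : ℚ) < N := by exact_mod_cast Nat.pos_of_dvd_of_pos hNdvd (by norm_num)
  have hn' : 7 ≤ n ∧ n ≠ 10 ∧ n ≠ 12 := by
    simp only [Set.mem_insert_iff, Set.mem_singleton_iff] at hn
    omega
  obtain ⟨e₂, he₂, rfl⟩ := h2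
  obtain ⟨e₃, he₃, rfl⟩ := h3
  obtain ⟨e₄, he₄, rfl⟩ := h4
  obtain ⟨e₅, he₅, rfl⟩ := h5
  obtain ⟨e, he, hfinf⟩ := hinf
  obtain ⟨z, rfl⟩ := hinfz
  have hz := exponent_le_eleven_of_dvd_twelve hNdvd hn'.1 hn'.2.1 hn'.2.2 he hfinf
  have hsum_neg : (z : ℚ) - 12 - (6 + 6 * e₂ / N) - (6 + 6 * e₃ / N) - (6 + 18 * e₄ / N)
      - (6 + 18 * e₅ / N) < 0 := by
    have := neg_half_le_mul_intCast_div_natCast (a := (6 : ℚ)) (by norm_num) he₂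
    have := neg_half_le_mul_intCast_div_natCast (a := (6 : ℚ)) (by norm_num) he₃
    have := neg_half_le_mul_intCast_div_natCast (a := (18 : ℚ)) (by norm_num) he₄
    have := neg_half_le_mul_intCast_div_natCast (a := (18 : ℚ)) (by norm_num) he₅
    have : (z : ℚ) ≤ 11 := by exact_mod_cast hz
    linarith
  have hd_neg := mul_neg_of_pos_of_neg (div_pos hNpos (by norm_num : (0 : ℚ) < 12)) hsum_neg
  linarith [(m.cast_nonneg : (0 : ℚ) ≤ m)]

/-- Case 3 of the Kovacic algorithm, first stage. For each subcase
N ∈ {4, 6, 12} and every n with n ∈ {7, 8, 9, 11} or n ≥ 13, no combination of exponents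
f₁ = 12, f₂, f₃ ∈ {6 + 6e/N : |e| ≤ N/2} ∩ ℤ, f₄, f₅ ∈ {6 + 18e/N : |e| ≤ N/2} ∩ ℤ and
f_∞ ∈ {6 + (12e/N)(n+2)/n : |e| ≤ N/2} ∩ ℤ makes d = (N/12)(f_∞ − Σⱼ fⱼ) a nonnegative
integer. -/
theorem statement5 (N n : ℕ) (hN : N ∈ ({4, 6, 12} : Set ℕ))
    (hn : n ∈ ({7, 8, 9, 11} : Set ℕ) ∨ 13 ≤ n)
    (f₂ f₃ f₄ f₅ finf : ℚ)
    (h2 : ∃ e : ℤ, 2 * |e| ≤ (N : ℤ) ∧ f₂ = 6 + 6 * (e : ℚ) / (N : ℚ))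
    (h2z : ∃ z : ℤ, f₂ = (z : ℚ))
    (h3 : ∃ e : ℤ, 2 * |e| ≤ (N : ℤ) ∧ f₃ = 6 + 6 * (e : ℚ) / (N : ℚ))
    (h3z : ∃ z : ℤ, f₃ = (z : ℚ))
    (h4 : ∃ e : ℤ, 2 * |e| ≤ (N : ℤ) ∧ f₄ = 6 + 18 * (e : ℚ) / (N : ℚ))
    (h4z : ∃ z : ℤ, f₄ = (z : ℚ))
    (h5 : ∃ e : ℤ, 2 * |e| ≤ (N : ℤ) ∧ f₅ = 6 + 18 * (e : ℚ) / (N : ℚ))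
    (h5z : ∃ z : ℤ, f₅ = (z : ℚ))
    (hinf : ∃ e : ℤ, 2 * |e| ≤ (N : ℤ) ∧
      finf = 6 + (12 * (e : ℚ) / (N : ℚ)) * (((n : ℚ) + 2) / (n : ℚ)))
    (hinfz : ∃ z : ℤ, finf = (z : ℚ)) :
    ¬ ∃ m : ℕ, ((N : ℚ) / 12) * (finf - 12 - f₂ - f₃ - f₄ - f₅) = (m : ℚ) :=
  statement5_general N n hN hn f₂ f₃ f₄ f₅ finf h2 h3 h4 h5 hinf hinfz
end

section
/- Let r be a smooth positive function on (0,π)×ℝ satisfying the equatorial symmetry r(π−θ, φ) = r(θ, φ) for all (θ,φ). Let φ₀: I → ℝ be a C² solution of φ₀'' + Γ^φ_{φφ}(π/2, φ₀(s))·φ₀'(s)² = 0, so that s ↦ (π/2, φ₀(s)) is a geodesic. Suppose (θ(s,λ), φ(s,λ)) is a family of geodesics, C² jointly in (s,λ) for λ in a neighborhood of 0, with (θ(s,0), φ(s,0)) = (π/2, φ₀(s)) for all s. Then the normal variation ξ(s) = (∂θ/∂λ)(s, 0) satisfies the decoupled normal variational equation ξ'' = −(∂_θΓ^θ_{φφ})(π/2,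 φ₀(s))·φ₀'(s)²·ξ − 2·Γ^θ_{θφ}(π/2, φ₀(s))·φ₀'(s)·ξ'. -/
noncomputable section
open Real Set

/-! ### Auxiliary toolkit -/

/-- curve x ↦ (x, p) has derivative (1,0) -/
lemma hasDerivAt_fst_sec (t p : ℝ) : HasDerivAt (fun x : ℝ => (x, p)) ((1:ℝ), (0:ℝ)) t :=
  (hasDerivAt_id t).prodMk (hasDerivAt_const t p)

lemma hasDerivAt_snd_sec (t p : ℝ) : HasDerivAt (fun x : ℝ => (t, x)) ((0:ℝ), (1:ℝ)) p :=
  (hasDerivAt_const p t).prodMk (hasDerivAt_id p)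

lemma hasDerivAt_pθ {f : ℝ → ℝ → ℝ} {t p : ℝ}
    (hf : DifferentiableAt ℝ (fun q : ℝ × ℝ => f q.1 q.2) (t, p)) :
    HasDerivAt (fun x => f x p) (fderiv ℝ (fun q : ℝ × ℝ => f q.1 q.2) (t, p) (1, 0)) t := by
  have := hf.hasFDerivAt.comp_hasDerivAt t (hasDerivAt_fst_sec t p); exact this

lemma hasDerivAt_pφ {f : ℝ → ℝ → ℝ} {t p : ℝ}
    (hf : DifferentiableAt ℝ (fun q : ℝ × ℝ => f q.1 q.2) (t, p)) :
    HasDerivAt (fun x => f t x) (fderiv ℝ (fun q : ℝ × ℝ => f q.1 q.2) (t, p) (0, 1)) p :=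
  hf.hasFDerivAt.comp_hasDerivAt p (hasDerivAt_snd_sec t p)

lemma pθ_eq_fderiv {f : ℝ → ℝ → ℝ} {t p : ℝ}
    (hf : DifferentiableAt ℝ (fun q : ℝ × ℝ => f q.1 q.2) (t, p)) :
    pθ f t p = fderiv ℝ (fun q : ℝ × ℝ => f q.1 q.2) (t, p) (1, 0) :=
  (hasDerivAt_pθ hf).deriv

lemma pφ_eq_fderiv {f : ℝ → ℝ → ℝ} {t p : ℝ}
    (hf : DifferentiableAt ℝ (fun q : ℝ × ℝ => f q.1 q.2) (t, p)) :
    pφ f t p = fderiv ℝ (fun q : ℝ × ℝ => f q.1 q.2) (t, p) (0, 1) :=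
  (hasDerivAt_pφ hf).deriv

/-- On an open set where f is C^n (n ≥ m+1), the partial derivative pθ is C^m. -/
lemma contDiffOn_pθ {f : ℝ → ℝ → ℝ} {U : Set (ℝ × ℝ)} {m n : WithTop ℕ∞}
    (hU : IsOpen U) (hf : ContDiffOn ℝ n (fun q : ℝ × ℝ => f q.1 q.2) U) (hmn : m + 1 ≤ n) :
    ContDiffOn ℝ m (fun q : ℝ × ℝ => pθ f q.1 q.2) U := by
  have hd : ContDiffOn ℝ m (fderiv ℝ (fun q : ℝ × ℝ => f q.1 q.2)) U :=
    hf.fderiv_of_isOpen hU hmn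
  have happ : ContDiffOn ℝ m
      (fun q : ℝ × ℝ => fderiv ℝ (fun q : ℝ × ℝ => f q.1 q.2) q (1, 0)) U :=
    (ContinuousLinearMap.apply ℝ ℝ ((1:ℝ), (0:ℝ))).contDiff.comp_contDiffOn hd
  refine happ.congr fun q hq => ?_
  have hdiff : DifferentiableAt ℝ (fun q : ℝ × ℝ => f q.1 q.2) q := by
    have h1 : ContDiffAt ℝ n (fun q : ℝ × ℝ => f q.1 q.2) q :=
      hf.contDiffAt (hU.mem_nhds hq)
    exact h1.differentiableAt (by intro h; rw [h] at hmn; simp at hmn)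
  have := pθ_eq_fderiv (f := f) (t := q.1) (p := q.2) (by simp only [Prod.mk.eta]; exact hdiff)
  simpa using this

lemma contDiffOn_pφ {f : ℝ → ℝ → ℝ} {U : Set (ℝ × ℝ)} {m n : WithTop ℕ∞}
    (hU : IsOpen U) (hf : ContDiffOn ℝ n (fun q : ℝ × ℝ => f q.1 q.2) U) (hmn : m + 1 ≤ n) :
    ContDiffOn ℝ m (fun q : ℝ × ℝ => pφ f q.1 q.2) U := by
  have hd : ContDiffOn ℝ m (fderiv ℝ (fun q : ℝ × ℝ => f q.1 q.2)) U :=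
    hf.fderiv_of_isOpen hU hmn
  have happ : ContDiffOn ℝ m
      (fun q : ℝ × ℝ => fderiv ℝ (fun q : ℝ × ℝ => f q.1 q.2) q (0, 1)) U :=
    (ContinuousLinearMap.apply ℝ ℝ ((0:ℝ), (1:ℝ))).contDiff.comp_contDiffOn hd
  refine happ.congr fun q hq => ?_
  have hdiff : DifferentiableAt ℝ (fun q : ℝ × ℝ => f q.1 q.2) q := by
    have h1 : ContDiffAt ℝ n (fun q : ℝ × ℝ => f q.1 q.2) q :=
      hf.contDiffAt (hU.mem_nhds hq)
    exact h1.differentiableAt (by intro h; rw [h] at hmn; simp at hmn)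
  have := pφ_eq_fderiv (f := f) (t := q.1) (p := q.2) (by simp only [Prod.mk.eta]; exact hdiff)
  simpa using this

def Udom : Set (ℝ × ℝ) := Ioo 0 π ×ˢ univ
lemma isOpen_Udom : IsOpen Udom := isOpen_Ioo.prod isOpen_univ

lemma top_add_one_le : (((⊤ : ℕ∞) : WithTop ℕ∞) + 1 : WithTop ℕ∞) ≤ ((⊤ : ℕ∞) : WithTop ℕ∞) := by
  exact_mod_cast (le_top : (⊤ : ℕ∞) + 1 ≤ ⊤)

variable {r : ℝ → ℝ → ℝ}

lemma cd_pθr (hr : SmoothPolar r) : ContDiffOn ℝ (⊤ : ℕ∞) (fun q : ℝ × ℝ => pθ r q.1 q.2) Udom :=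
  contDiffOn_pθ isOpen_Udom hr.1 top_add_one_le
lemma cd_pφr (hr : SmoothPolar r) : ContDiffOn ℝ (⊤ : ℕ∞) (fun q : ℝ × ℝ => pφ r q.1 q.2) Udom :=
  contDiffOn_pφ isOpen_Udom hr.1 top_add_one_le

lemma cd_gθθ (hr : SmoothPolar r) : ContDiffOn ℝ (⊤ : ℕ∞) (fun q : ℝ × ℝ => gθθ r q.1 q.2) Udom :=
  ((cd_pθr hr).pow 2).add (hr.1.pow 2)
lemma cd_gθφ (hr : SmoothPolar r) : ContDiffOn ℝ (⊤ : ℕ∞) (fun q : ℝ × ℝ => gθφ r q.1 q.2) Udom :=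
  (cd_pθr hr).mul (cd_pφr hr)
lemma cd_gφφ (hr : SmoothPolar r) : ContDiffOn ℝ (⊤ : ℕ∞) (fun q : ℝ × ℝ => gφφ r q.1 q.2) Udom :=
  ((cd_pφr hr).pow 2).add ((hr.1.pow 2).mul
    (((Real.contDiff_sin.comp contDiff_fst).contDiffOn).pow 2))
lemma cd_gdet (hr : SmoothPolar r) : ContDiffOn ℝ (⊤ : ℕ∞) (fun q : ℝ × ℝ => gdet r q.1 q.2) Udom :=
  ((cd_gθθ hr).mul (cd_gφφ hr)).sub ((cd_gθφ hr).pow 2)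

lemma gdet_pos (hr : SmoothPolar r) {t p : ℝ} (ht : t ∈ Ioo 0 π) : 0 < gdet r t p := by
  have hrpos := hr.2 t ht p
  have hs : 0 < sin t := Real.sin_pos_of_pos_of_lt_pi ht.1 ht.2
  unfold gdet gθθ gθφ gφφ
  have h : (pθ r t p ^ 2 + r t p ^ 2) * (pφ r t p ^ 2 + r t p ^ 2 * sin t ^ 2)
      - (pθ r t p * pφ r t p) ^ 2
      = r t p ^ 2 * (pφ r t p ^ 2 + sin t ^ 2 * (pθ r t p ^ 2 + r t p ^ 2)) := by ring
  rw [h]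
  have h1 : 0 < r t p ^ 2 := by positivity
  have h2 : 0 < pφ r t p ^ 2 + sin t ^ 2 * (pθ r t p ^ 2 + r t p ^ 2) := by positivity
  positivity

lemma cd_Γθθθ (hr : SmoothPolar r) : ContDiffOn ℝ (⊤ : ℕ∞) (fun q : ℝ × ℝ => Γθθθ r q.1 q.2) Udom := by
  have hne : ∀ q ∈ Udom, gdet r q.1 q.2 ≠ 0 := fun q hq => (gdet_pos hr hq.1).ne'
  exact contDiffOn_const.mul ((((cd_gφφ hr).div (cd_gdet hr) hne).mul
      (contDiffOn_pθ isOpen_Udom (cd_gθθ hr) top_add_one_le)).add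
    ((((cd_gθφ hr).neg).div (cd_gdet hr) hne).mul
      ((contDiffOn_const.mul (contDiffOn_pθ isOpen_Udom (cd_gθφ hr) top_add_one_le)).sub
        (contDiffOn_pφ isOpen_Udom (cd_gθθ hr) top_add_one_le))))

lemma cd_Γθθφ (hr : SmoothPolar r) : ContDiffOn ℝ (⊤ : ℕ∞) (fun q : ℝ × ℝ => Γθθφ r q.1 q.2) Udom := by
  have hne : ∀ q ∈ Udom, gdet r q.1 q.2 ≠ 0 := fun q hq => (gdet_pos hr hq.1).ne'
  exact contDiffOn_const.mul ((((cd_gφφ hr).div (cd_gdet hr) hne).mul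
      (contDiffOn_pφ isOpen_Udom (cd_gθθ hr) top_add_one_le)).add
    ((((cd_gθφ hr).neg).div (cd_gdet hr) hne).mul
      (contDiffOn_pθ isOpen_Udom (cd_gφφ hr) top_add_one_le)))

lemma cd_Γθφφ (hr : SmoothPolar r) : ContDiffOn ℝ (⊤ : ℕ∞) (fun q : ℝ × ℝ => Γθφφ r q.1 q.2) Udom := by
  have hne : ∀ q ∈ Udom, gdet r q.1 q.2 ≠ 0 := fun q hq => (gdet_pos hr hq.1).ne'
  exact contDiffOn_const.mul ((((cd_gφφ hr).div (cd_gdet hr) hne).mul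
      ((contDiffOn_const.mul (contDiffOn_pφ isOpen_Udom (cd_gθφ hr) top_add_one_le)).sub
        (contDiffOn_pθ isOpen_Udom (cd_gφφ hr) top_add_one_le))).add
    ((((cd_gθφ hr).neg).div (cd_gdet hr) hne).mul
      (contDiffOn_pφ isOpen_Udom (cd_gφφ hr) top_add_one_le)))

/-! ### Symmetry lemmas -/

lemma mem_Udom_equator (p : ℝ) : ((π / 2 : ℝ), p) ∈ Udom :=
  ⟨⟨by positivity, half_lt_self pi_pos⟩, mem_univ _⟩

lemma pθ_zero_of_even {f : ℝ → ℝ → ℝ} {p : ℝ}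
    (hf : DifferentiableAt ℝ (fun q : ℝ × ℝ => f q.1 q.2) (π / 2, p))
    (hsymf : ∀ x ∈ Ioo 0 π, f (π - x) p = f x p) : pθ f (π / 2) p = 0 := by
  set d := fderiv ℝ (fun q : ℝ × ℝ => f q.1 q.2) (π / 2, p) (1, 0) with hd
  have h1 : HasDerivAt (fun x => f x p) d (π / 2) := hasDerivAt_pθ hf
  have hπ : HasDerivAt (fun x : ℝ => π - x) (-1) (π / 2) :=
    (hasDerivAt_id (π / 2)).const_sub π
  have h1' : HasDerivAt (fun x => f x p) d (π - π / 2) := by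
    rw [sub_half]; exact h1
  have hneg : HasDerivAt (fun x => f (π - x) p) (d * -1) (π / 2) := h1'.comp (π / 2) hπ
  have hmem : Ioo (0 : ℝ) π ∈ nhds (π / 2) :=
    isOpen_Ioo.mem_nhds ⟨by positivity, half_lt_self pi_pos⟩
  have heq : (fun x => f (π - x) p) =ᶠ[nhds (π / 2)] (fun x => f x p) := by
    filter_upwards [hmem] with x hx using hsymf x hx
  have h2 : HasDerivAt (fun x => f x p) (d * -1) (π / 2) := by
    exact hneg.congr_of_eventuallyEq heq.symm
  have : d = d * -1 := h1.unique h2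
  have hd0 : d = 0 := by linarith [this]
  rw [pθ_eq_fderiv hf, ← hd, hd0]

section Sym
variable (hr : SmoothPolar r) (hsym : ∀ t p : ℝ, r (π - t) p = r t p)
include hr hsym

lemma pθr_zero (p : ℝ) : pθ r (π / 2) p = 0 :=
  pθ_zero_of_even
    ((hr.1.contDiffAt (isOpen_Udom.mem_nhds (mem_Udom_equator p))).differentiableAt
      (by simp))
    (fun x _ => hsym x p)

omit hr in
lemma pφr_even (t p : ℝ) : pφ r (π - t) p = pφ r t p := by
  unfold pφ
  have : (fun x => r (π - t) x) = fun x => r t x := funext fun x => hsym t x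
  rw [this]

omit hr in
lemma gφφ_even (t : ℝ) (p : ℝ) : gφφ r (π - t) p = gφφ r t p := by
  unfold gφφ
  rw [pφr_even hsym, hsym, Real.sin_pi_sub]

lemma pθ_gφφ_zero (p : ℝ) : pθ (gφφ r) (π / 2) p = 0 :=
  pθ_zero_of_even
    (((cd_gφφ hr).contDiffAt (isOpen_Udom.mem_nhds (mem_Udom_equator p))).differentiableAt
      (by simp))
    (fun x _ => gφφ_even hsym x p)

lemma gθφ_zero (p : ℝ) : gθφ r (π / 2) p = 0 := by
  unfold gθφ; rw [pθr_zero hr hsym]; ring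

lemma pφ_gθφ_zero (p : ℝ) : pφ (gθφ r) (π / 2) p = 0 := by
  unfold pφ
  have : (fun x => gθφ r (π / 2) x) = fun _ => (0 : ℝ) :=
    funext fun x => gθφ_zero hr hsym x
  rw [this, deriv_const']

lemma Γθφφ_zero (p : ℝ) : Γθφφ r (π / 2) p = 0 := by
  unfold Γθφφ
  rw [gθφ_zero hr hsym, pφ_gθφ_zero hr hsym, pθ_gφφ_zero hr hsym]
  ring

end Sym

/-! ### Sections of two-variable functions -/

lemma hasDerivAt_sec1 {g : ℝ × ℝ → ℝ} {u v : ℝ}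
    (hg : DifferentiableAt ℝ g (u, v)) :
    HasDerivAt (fun x => g (x, v)) (fderiv ℝ g (u, v) (1, 0)) u :=
  hg.hasFDerivAt.comp_hasDerivAt u (hasDerivAt_fst_sec u v)

lemma hasDerivAt_sec2 {g : ℝ × ℝ → ℝ} {u v : ℝ}
    (hg : DifferentiableAt ℝ g (u, v)) :
    HasDerivAt (fun x => g (u, x)) (fderiv ℝ g (u, v) (0, 1)) v :=
  hg.hasFDerivAt.comp_hasDerivAt v (hasDerivAt_snd_sec u v)

/-- For a smooth positive polar surface with the equatorial symmetry
r(π−θ,φ) = r(θ,φ), and a family of geodesics (θ(s,λ), φ(s,λ)), C² jointly, equal at λ = 0 to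
the equatorial planar geodesic (π/2, φ₀(s)), the normal variation ξ(s) = ∂θ/∂λ(s,0) satisfies
the decoupled normal variational equation
ξ'' = −(∂_θΓ^θ_{φφ})(π/2, φ₀)·φ₀'²·ξ − 2·Γ^θ_{θφ}(π/2, φ₀)·φ₀'·ξ'. -/
theorem statement6 (r : ℝ → ℝ → ℝ) (hr : SmoothPolar r)
    (hsym : ∀ t p : ℝ, r (π - t) p = r t p)
    (I : Set ℝ) (hI : IsOpen I)
    (φ₀ : ℝ → ℝ) (hφ₀ : ContDiffOn ℝ 2 φ₀ I)
    (hred : ∀ s ∈ I, deriv (deriv φ₀) s + Γφφφ r (π / 2) (φ₀ s) * (deriv φ₀ s) ^ 2 = 0)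
    (δ : ℝ) (hδ : 0 < δ)
    (θf φf : ℝ → ℝ → ℝ)
    (hθC2 : ContDiffOn ℝ 2 (fun q : ℝ × ℝ => θf q.1 q.2) (I ×ˢ Ioo (-δ) δ))
    (hφC2 : ContDiffOn ℝ 2 (fun q : ℝ × ℝ => φf q.1 q.2) (I ×ˢ Ioo (-δ) δ))
    (hrange : ∀ lam ∈ Ioo (-δ) δ, ∀ s ∈ I, θf s lam ∈ Ioo 0 π)
    (hgeo : ∀ lam ∈ Ioo (-δ) δ, ∀ s ∈ I,
      GeodesicEq r (fun u => θf u lam) (fun u => φf u lam) s)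
    (hbase : ∀ s ∈ I, θf s 0 = π / 2 ∧ φf s 0 = φ₀ s) :
    ∀ s ∈ I,
      deriv (deriv (fun u => deriv (fun lam => θf u lam) 0)) s =
        -(deriv (fun t => Γθφφ r t (φ₀ s)) (π / 2)) * (deriv φ₀ s) ^ 2
            * deriv (fun lam => θf s lam) 0
          - 2 * Γθθφ r (π / 2) (φ₀ s) * deriv φ₀ s
            * deriv (fun u => deriv (fun lam => θf u lam) 0) s := by
  intro s hs
  have hRopen : IsOpen (I ×ˢ Ioo (-δ) δ) := hI.prod isOpen_Ioo
  have h0δ : (0:ℝ) ∈ Ioo (-δ) δ := ⟨by linarith, hδ⟩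
  have hsR : ((s, (0:ℝ))) ∈ I ×ˢ Ioo (-δ) δ := ⟨hs, h0δ⟩
  set R : Set (ℝ × ℝ) := I ×ˢ Ioo (-δ) δ with hRdef
  set Θ : ℝ × ℝ → ℝ := fun q => θf q.1 q.2 with hΘdef
  set Φ : ℝ × ℝ → ℝ := fun q => φf q.1 q.2 with hΦdef
  have hΘdiff : ∀ q ∈ R, DifferentiableAt ℝ Θ q := fun q hq =>
    (hθC2.contDiffAt (hRopen.mem_nhds hq)).differentiableAt two_ne_zero
  have hΦdiff : ∀ q ∈ R, DifferentiableAt ℝ Φ q := fun q hq =>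
    (hφC2.contDiffAt (hRopen.mem_nhds hq)).differentiableAt two_ne_zero
  set hm : ℝ × ℝ → ℝ := fun q => fderiv ℝ Θ q (1, 0) with hhmdef
  set km : ℝ × ℝ → ℝ := fun q => fderiv ℝ Φ q (1, 0) with hkmdef
  have hone_le : ((1 : WithTop ℕ∞) + 1 : WithTop ℕ∞) ≤ 2 := by norm_num
  have hhmC1 : ContDiffOn ℝ 1 hm R :=
    (ContinuousLinearMap.apply ℝ ℝ ((1:ℝ), (0:ℝ))).contDiff.comp_contDiffOn
      (hθC2.fderiv_of_isOpen hRopen hone_le)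
  have hkmC1 : ContDiffOn ℝ 1 km R :=
    (ContinuousLinearMap.apply ℝ ℝ ((1:ℝ), (0:ℝ))).contDiff.comp_contDiffOn
      (hφC2.fderiv_of_isOpen hRopen hone_le)
  have hhmdiff : ∀ q ∈ R, DifferentiableAt ℝ hm q := fun q hq =>
    (hhmC1.contDiffAt (hRopen.mem_nhds hq)).differentiableAt one_ne_zero
  have hkmdiff : ∀ q ∈ R, DifferentiableAt ℝ km q := fun q hq =>
    (hkmC1.contDiffAt (hRopen.mem_nhds hq)).differentiableAt one_ne_zero
  set ξ : ℝ → ℝ := fun u => deriv (fun lam => θf u lam) 0 with hξdef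
  have hξ_eq : ∀ u ∈ I, ξ u = fderiv ℝ Θ (u, 0) (0, 1) := fun u hu =>
    (hasDerivAt_sec2 (hΘdiff (u, 0) ⟨hu, h0δ⟩)).deriv
  set ξd : ℝ → ℝ := fun u => fderiv ℝ hm (u, 0) (0, 1) with hξddef
  -- Clairaut: ξ has derivative ξd u at every u ∈ I
  have hξ'I : ∀ u ∈ I, HasDerivAt ξ (ξd u) u := by
    intro u hu
    have huR : ((u, (0:ℝ))) ∈ R := ⟨hu, h0δ⟩
    have hDθdiff : DifferentiableAt ℝ (fderiv ℝ Θ) (u, 0) :=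
      ((hθC2.fderiv_of_isOpen hRopen hone_le).contDiffAt
        (hRopen.mem_nhds huR)).differentiableAt one_ne_zero
    have hD : HasFDerivAt (fderiv ℝ Θ) (fderiv ℝ (fderiv ℝ Θ) (u, 0)) (u, 0) :=
      hDθdiff.hasFDerivAt
    set f'' := fderiv ℝ (fderiv ℝ Θ) (u, 0) with hf''def
    have hey : ∀ᶠ y in nhds (u, 0), HasFDerivAt Θ (fderiv ℝ Θ y) y := by
      filter_upwards [hRopen.mem_nhds huR] with y hy using (hΘdiff y hy).hasFDerivAt
    have hsymm := second_derivative_symmetric_of_eventually hey hD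
      (((1:ℝ), (0:ℝ))) (((0:ℝ), (1:ℝ)))
    have happ : HasFDerivAt (fun q => fderiv ℝ Θ q (0, 1))
        ((ContinuousLinearMap.apply ℝ ℝ (((0:ℝ), (1:ℝ)))).comp f'') (u, 0) :=
      (ContinuousLinearMap.apply ℝ ℝ (((0:ℝ), (1:ℝ)))).hasFDerivAt.comp (u, 0) hD
    have hder : HasDerivAt (fun x => fderiv ℝ Θ (x, 0) (0, 1)) (f'' (1, 0) (0, 1)) u := by
      have := happ.comp_hasDerivAt u (hasDerivAt_fst_sec u 0)
      exact this
    have hξev : ξ =ᶠ[nhds u] fun x => fderiv ℝ Θ (x, 0) (0, 1) := by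
      filter_upwards [hI.mem_nhds hu] with x hx using hξ_eq x hx
    have hξder : HasDerivAt ξ (f'' (1, 0) (0, 1)) u := hder.congr_of_eventuallyEq hξev
    have happ2 : HasFDerivAt hm
        ((ContinuousLinearMap.apply ℝ ℝ (((1:ℝ), (0:ℝ)))).comp f'') (u, 0) :=
      (ContinuousLinearMap.apply ℝ ℝ (((1:ℝ), (0:ℝ)))).hasFDerivAt.comp (u, 0) hD
    have hξd_eq : ξd u = f'' (0, 1) (1, 0) := by
      rw [hξddef]
      simp only [happ2.fderiv]
      rfl
    rw [show ξd u = f'' (1, 0) (0, 1) from hξd_eq.trans hsymm.symm]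
    exact hξder
  have hhmlam : ∀ u ∈ I, HasDerivAt (fun x => hm (u, x)) (ξd u) 0 := fun u hu =>
    hasDerivAt_sec2 (hhmdiff (u, 0) ⟨hu, h0δ⟩)
  -- the acceleration function
  set G : ℝ × ℝ → ℝ := fun q =>
    -(Γθθθ r (Θ q) (Φ q) * (hm q) ^ 2 + 2 * Γθθφ r (Θ q) (Φ q) * hm q * km q
      + Γθφφ r (Θ q) (Φ q) * (km q) ^ 2) with hGdef
  have hUmem : ∀ q ∈ R, ((Θ q, Φ q) : ℝ × ℝ) ∈ Udom := fun q hq =>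
    ⟨hrange q.2 hq.2 q.1 hq.1, mem_univ _⟩
  have hGC1 : ContDiffOn ℝ 1 G R := by
    have hpair : ContDiffOn ℝ 1 (fun q => ((Θ q, Φ q) : ℝ × ℝ)) R :=
      (hθC2.prodMk hφC2).of_le one_le_two
    have hA0 : ContDiffOn ℝ 1 ((fun z : ℝ × ℝ => Γθθθ r z.1 z.2) ∘ (fun q => ((Θ q, Φ q) : ℝ × ℝ))) R :=
      ContDiffOn.comp ((cd_Γθθθ hr).of_le (by simp)) hpair (fun q hq => hUmem q hq)
    have hA : ContDiffOn ℝ 1 (fun q => Γθθθ r (Θ q) (Φ q)) R :=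
      hA0.congr (fun q _ => rfl)
    have hB0 : ContDiffOn ℝ 1 ((fun z : ℝ × ℝ => Γθθφ r z.1 z.2) ∘ (fun q => ((Θ q, Φ q) : ℝ × ℝ))) R :=
      ContDiffOn.comp ((cd_Γθθφ hr).of_le (by simp)) hpair (fun q hq => hUmem q hq)
    have hB : ContDiffOn ℝ 1 (fun q => Γθθφ r (Θ q) (Φ q)) R :=
      hB0.congr (fun q _ => rfl)
    have hC0 : ContDiffOn ℝ 1 ((fun z : ℝ × ℝ => Γθφφ r z.1 z.2) ∘ (fun q => ((Θ q, Φ q) : ℝ × ℝ))) R :=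
      ContDiffOn.comp ((cd_Γθφφ hr).of_le (by simp)) hpair (fun q hq => hUmem q hq)
    have hC : ContDiffOn ℝ 1 (fun q => Γθφφ r (Θ q) (Φ q)) R :=
      hC0.congr (fun q _ => rfl)
    exact (((hA.mul (hhmC1.pow 2)).add
      (((contDiffOn_const.mul hB).mul hhmC1).mul hkmC1)).add
      (hC.mul (hkmC1.pow 2))).neg
  have hGdiff : ∀ q ∈ R, DifferentiableAt ℝ G q := fun q hq =>
    (hGC1.contDiffAt (hRopen.mem_nhds hq)).differentiableAt one_ne_zero
  -- the geodesic equation in terms of hm and G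
  have hG' : ∀ q ∈ R, HasDerivAt (fun x => hm (x, q.2)) (G q) q.1 := by
    rintro ⟨u, lam⟩ hq
    have hq1 : u ∈ I := hq.1
    have hq2 : lam ∈ Ioo (-δ) δ := hq.2
    have hd : HasDerivAt (fun x => hm (x, lam)) (fderiv ℝ hm (u, lam) (1, 0)) u :=
      hasDerivAt_sec1 (hhmdiff (u, lam) hq)
    have hev : (fun x => hm (x, lam)) =ᶠ[nhds u] deriv (fun y => θf y lam) := by
      filter_upwards [hI.mem_nhds hq1] with x hx
      exact ((hasDerivAt_sec1 (hΘdiff (x, lam) ⟨hx, hq2⟩)).deriv).symm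
    have h2 : deriv (fun x => hm (x, lam)) u = deriv (deriv (fun y => θf y lam)) u :=
      hev.deriv_eq
    have e1 : deriv (fun y => θf y lam) u = hm (u, lam) :=
      (hasDerivAt_sec1 (hΘdiff (u, lam) hq)).deriv
    have e2 : deriv (fun y => φf y lam) u = km (u, lam) :=
      (hasDerivAt_sec1 (hΦdiff (u, lam) hq)).deriv
    have hg := (hgeo lam hq2 u hq1).1
    have hGu : G (u, lam) = -(Γθθθ r (θf u lam) (φf u lam) * hm (u, lam) ^ 2
        + 2 * Γθθφ r (θf u lam) (φf u lam) * hm (u, lam) * km (u, lam)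
        + Γθφφ r (θf u lam) (φf u lam) * km (u, lam) ^ 2) := rfl
    have h4 : deriv (deriv (fun y => θf y lam)) u = G (u, lam) := by
      rw [e1, e2] at hg
      rw [hGu]
      linarith [hg]
    have h5 : fderiv ℝ hm (u, lam) (1, 0) = G (u, lam) := by
      rw [← hd.deriv, h2, h4]
    rw [← h5]
    exact hd
  set Gd : ℝ × ℝ → ℝ := fun q => fderiv ℝ G q (0, 1) with hGddef
  have hGdcont : ContinuousOn Gd R := by
    have h0 : ContDiffOn ℝ 0 (fderiv ℝ G) R := hGC1.fderiv_of_isOpen hRopen (by norm_num)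
    exact (ContinuousLinearMap.apply ℝ ℝ ((0:ℝ), (1:ℝ))).continuous.comp_continuousOn
      (contDiffOn_zero.mp h0)
  have hGdlam : ∀ q ∈ R, HasDerivAt (fun x => G (q.1, x)) (Gd q) q.2 := fun q hq => by
    have := hasDerivAt_sec2 (hGdiff q hq)
    simpa using this
  have hGcont : ContinuousOn G R := hGC1.continuousOn
  -- localization
  obtain ⟨η, hη, hIcc⟩ : ∃ η > 0, Icc (s - η) (s + η) ⊆ I := by
    obtain ⟨ε, hε, hball⟩ := Metric.isOpen_iff.mp hI s hs
    refine ⟨ε / 2, by positivity, fun x hx => hball ?_⟩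
    rw [Metric.mem_ball, Real.dist_eq]
    have h1 := hx.1; have h2 := hx.2
    rw [abs_lt]; constructor <;> [linarith; linarith]
  -- representation of ξd near s
  have hrep : ∀ u ∈ Ioo (s - η) (s + η),
      ξd u = ξd (s - η) + ∫ t in (s - η)..u, Gd (t, 0) := by
    intro u hu
    have hau : s - η ≤ u := le_of_lt hu.1
    have haI : s - η ∈ I := hIcc ⟨le_rfl, by linarith⟩
    have huI : u ∈ I := hIcc ⟨le_of_lt hu.1, le_of_lt hu.2⟩
    have huIcc : uIcc (s - η) u ⊆ Icc (s - η) (s + η) := by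
      rw [uIcc_of_le hau]
      exact Icc_subset_Icc le_rfl (le_of_lt hu.2)
    set δ₂ := δ / 2 with hδ₂def
    have hδ₂pos : 0 < δ₂ := by positivity
    have hballsub : Metric.ball (0:ℝ) δ₂ ⊆ Ioo (-δ) δ := by
      intro x hx
      rw [Metric.mem_ball, Real.dist_eq, sub_zero, abs_lt] at hx
      constructor
      · linarith [hx.1]
      · linarith [hx.2]
    have hmemR : ∀ t ∈ uIcc (s - η) u, ∀ x ∈ Metric.ball (0:ℝ) δ₂, ((t, x)) ∈ R :=
      fun t ht x hx => ⟨hIcc (huIcc ht), hballsub hx⟩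
    have hFTC : ∀ x ∈ Ioo (-δ) δ,
        ∫ t in (s - η)..u, G (t, x) = hm (u, x) - hm (s - η, x) := by
      intro x hx
      apply intervalIntegral.integral_eq_sub_of_hasDerivAt
      · intro t ht
        exact hG' (t, x) ⟨hIcc (huIcc ht), hx⟩
      · apply ContinuousOn.intervalIntegrable
        exact hGcont.comp (continuous_id.prodMk continuous_const).continuousOn
          (fun t ht => ⟨hIcc (huIcc ht), hx⟩)
    obtain ⟨C, hC⟩ : ∃ C, ∀ q ∈ Icc (s - η) (s + η) ×ˢ Icc (-δ₂) δ₂, ‖Gd q‖ ≤ C := by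
      have hK : IsCompact (Icc (s - η) (s + η) ×ˢ Icc (-δ₂) δ₂) :=
        isCompact_Icc.prod isCompact_Icc
      apply hK.exists_bound_of_continuousOn
      apply hGdcont.mono
      intro q hq
      refine ⟨hIcc hq.1, ?_, ?_⟩
      · have h := hq.2.1; rw [hδ₂def] at h; linarith
      · have h := hq.2.2; rw [hδ₂def] at h; linarith
    have h1 : ∀ᶠ x in nhds (0:ℝ), MeasureTheory.AEStronglyMeasurable (fun t => G (t, x))
        (MeasureTheory.volume.restrict (Set.uIoc (s - η) u)) := by
      filter_upwards [Metric.ball_mem_nhds (0:ℝ) hδ₂pos] with x hx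
      refine ContinuousOn.aestronglyMeasurable ?_ measurableSet_uIoc
      exact hGcont.comp (continuous_id.prodMk continuous_const).continuousOn
        (fun t ht => hmemR t (uIoc_subset_uIcc ht) x hx)
    have h2 : IntervalIntegrable (fun t => G (t, 0)) MeasureTheory.volume (s - η) u := by
      apply ContinuousOn.intervalIntegrable
      exact hGcont.comp (continuous_id.prodMk continuous_const).continuousOn
        (fun t ht => ⟨hIcc (huIcc ht), h0δ⟩)
    have h3 : MeasureTheory.AEStronglyMeasurable (fun t => Gd (t, 0))
        (MeasureTheory.volume.restrict (Set.uIoc (s - η) u)) := by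
      refine ContinuousOn.aestronglyMeasurable ?_ measurableSet_uIoc
      exact hGdcont.comp (continuous_id.prodMk continuous_const).continuousOn
        (fun t ht => ⟨hIcc (huIcc (uIoc_subset_uIcc ht)), h0δ⟩)
    have h4 : ∀ᵐ t ∂MeasureTheory.volume, t ∈ Set.uIoc (s - η) u →
        ∀ x ∈ Metric.ball (0:ℝ) δ₂, ‖Gd (t, x)‖ ≤ C := by
      apply Filter.Eventually.of_forall
      intro t ht x hx
      apply hC (t, x)
      refine ⟨huIcc (uIoc_subset_uIcc ht), ?_, ?_⟩
      · rw [Metric.mem_ball, Real.dist_eq, sub_zero, abs_lt] at hx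
        exact le_of_lt (neg_lt.mp (neg_lt.mpr hx.1))
      · rw [Metric.mem_ball, Real.dist_eq, sub_zero, abs_lt] at hx
        exact le_of_lt hx.2
    have h5 : IntervalIntegrable (fun _ : ℝ => C) MeasureTheory.volume (s - η) u :=
      intervalIntegrable_const
    have h6 : ∀ᵐ t ∂MeasureTheory.volume, t ∈ Set.uIoc (s - η) u →
        ∀ x ∈ Metric.ball (0:ℝ) δ₂, HasDerivAt (fun y => G (t, y)) (Gd (t, x)) x := by
      apply Filter.Eventually.of_forall
      intro t ht x hx
      exact hGdlam (t, x) (hmemR t (uIoc_subset_uIcc ht) x hx)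
    obtain ⟨-, key⟩ := intervalIntegral.hasDerivAt_integral_of_dominated_loc_of_deriv_le
      (𝕜 := ℝ) (μ := MeasureTheory.volume) (F := fun x t => G (t, x))
      (F' := fun x t => Gd (t, x)) (x₀ := (0:ℝ)) (a := s - η) (b := u)
      (bound := fun _ => C) (s := Metric.ball (0:ℝ) δ₂) (Metric.ball_mem_nhds (0:ℝ) hδ₂pos) h1 h2 h3 h4 h5 h6
    have hhd : HasDerivAt (fun x => hm (u, x) - hm (s - η, x)) (ξd u - ξd (s - η)) 0 :=
      (hhmlam u huI).sub (hhmlam (s - η) haI)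
    have hevint : (fun x => ∫ t in (s - η)..u, G (t, x)) =ᶠ[nhds (0:ℝ)]
        (fun x => hm (u, x) - hm (s - η, x)) := by
      filter_upwards [Ioo_mem_nhds (by linarith : -δ < (0:ℝ)) hδ] with x hx using hFTC x hx
    have key' : HasDerivAt (fun x => hm (u, x) - hm (s - η, x))
        (∫ t in (s - η)..u, Gd (t, 0)) 0 := key.congr_of_eventuallyEq hevint.symm
    have := hhd.unique key'
    linarith [this]
  have hds : HasDerivAt ξd (Gd (s, 0)) s := by
    have hsIoo : s ∈ Ioo (s - η) (s + η) := ⟨by linarith, by linarith⟩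
    have hevrep : ξd =ᶠ[nhds s] fun v => ξd (s - η) + ∫ t in (s - η)..v, Gd (t, 0) := by
      filter_upwards [Ioo_mem_nhds hsIoo.1 hsIoo.2] with v hv using hrep v hv
    have hcont : ∀ t ∈ Icc (s - η) (s + η), ContinuousAt (fun t => Gd (t, 0)) t := by
      intro t ht
      have hGdat : ContinuousAt Gd (t, 0) :=
        hGdcont.continuousAt (hRopen.mem_nhds ⟨hIcc ht, h0δ⟩)
      exact ContinuousAt.comp (f := fun t' : ℝ => ((t' : ℝ), (0:ℝ))) (x := t) hGdat
        ((continuous_id.prodMk continuous_const).continuousAt)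
    have hsub : uIcc (s - η) s ⊆ Icc (s - η) (s + η) := by
      rw [uIcc_of_le (by linarith : s - η ≤ s)]
      exact Icc_subset_Icc le_rfl (by linarith)
    have hint : IntervalIntegrable (fun t => Gd (t, 0)) MeasureTheory.volume (s - η) s := by
      apply ContinuousOn.intervalIntegrable
      intro t ht
      exact (hcont t (hsub ht)).continuousWithinAt
    have hmeas : StronglyMeasurableAtFilter (fun t => Gd (t, 0)) (nhds s)
        MeasureTheory.volume := by
      refine ⟨Ioo (s - η) (s + η), Ioo_mem_nhds hsIoo.1 hsIoo.2, ?_⟩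
      refine ContinuousOn.aestronglyMeasurable ?_ measurableSet_Ioo
      intro t ht
      exact (hcont t (Ioo_subset_Icc_self ht)).continuousWithinAt
    have hFTC2 : HasDerivAt (fun v => ξd (s - η) + ∫ t in (s - η)..v, Gd (t, 0))
        (Gd (s, 0)) s := by
      apply HasDerivAt.const_add
      exact intervalIntegral.integral_hasDerivAt_right hint hmeas
        (hcont s ⟨by linarith, by linarith⟩)
    exact hFTC2.congr_of_eventuallyEq hevrep
  -- base values
  have hbθ : ∀ u ∈ I, Θ (u, 0) = π / 2 := fun u hu => (hbase u hu).1
  have hbφ : ∀ u ∈ I, Φ (u, 0) = φ₀ u := fun u hu => (hbase u hu).2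
  have hhm0 : ∀ u ∈ I, hm (u, 0) = 0 := by
    intro u hu
    have hd : HasDerivAt (fun x => Θ (x, 0)) (hm (u, 0)) u :=
      hasDerivAt_sec1 (hΘdiff (u, 0) ⟨hu, h0δ⟩)
    have hev : (fun x => Θ (x, 0)) =ᶠ[nhds u] fun _ => π / 2 := by
      filter_upwards [hI.mem_nhds hu] with x hx using (hbase x hx).1
    have hc : HasDerivAt (fun x => Θ (x, 0)) 0 u :=
      (hasDerivAt_const u (π / 2)).congr_of_eventuallyEq hev
    exact hd.unique hc
  have hkm0 : ∀ u ∈ I, km (u, 0) = deriv φ₀ u := by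
    intro u hu
    have h1 : deriv (fun x => Φ (x, 0)) u = km (u, 0) :=
      (hasDerivAt_sec1 (hΦdiff (u, 0) ⟨hu, h0δ⟩)).deriv
    have hev : (fun x => Φ (x, 0)) =ᶠ[nhds u] φ₀ := by
      filter_upwards [hI.mem_nhds hu] with x hx using (hbase x hx).2
    rw [← h1, hev.deriv_eq]
  -- value of Gd (s,0)
  have hval : Gd (s, 0) =
      -(deriv (fun t => Γθφφ r t (φ₀ s)) (π / 2)) * (deriv φ₀ s) ^ 2
          * fderiv ℝ Θ (s, 0) (0, 1)
        - 2 * Γθθφ r (π / 2) (φ₀ s) * deriv φ₀ s * ξd s := by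
    have hΘlam : HasDerivAt (fun x => Θ (s, x)) (fderiv ℝ Θ (s, 0) (0, 1)) 0 :=
      hasDerivAt_sec2 (hΘdiff _ hsR)
    have hΦlam : HasDerivAt (fun x => Φ (s, x)) (fderiv ℝ Φ (s, 0) (0, 1)) 0 :=
      hasDerivAt_sec2 (hΦdiff _ hsR)
    have hhlam : HasDerivAt (fun x => hm (s, x)) (ξd s) 0 := hhmlam s hs
    have hklam : HasDerivAt (fun x => km (s, x)) (fderiv ℝ km (s, 0) (0, 1)) 0 :=
      hasDerivAt_sec2 (hkmdiff _ hsR)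
    have hpairlam : HasDerivAt (fun x => ((Θ (s, x), Φ (s, x)) : ℝ × ℝ))
        ((fderiv ℝ Θ (s, 0) (0, 1), fderiv ℝ Φ (s, 0) (0, 1))) 0 := hΘlam.prodMk hΦlam
    have hbase0 : ((Θ (s, 0), Φ (s, 0)) : ℝ × ℝ) = (π / 2, φ₀ s) := by
      rw [hbθ s hs, hbφ s hs]
    have hUs : ((π / 2, φ₀ s) : ℝ × ℝ) ∈ Udom := mem_Udom_equator _
    have hΓAd : DifferentiableAt ℝ (fun z : ℝ × ℝ => Γθθθ r z.1 z.2) (π / 2, φ₀ s) :=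
      ((cd_Γθθθ hr).contDiffAt (isOpen_Udom.mem_nhds hUs)).differentiableAt (by simp)
    have hΓBd : DifferentiableAt ℝ (fun z : ℝ × ℝ => Γθθφ r z.1 z.2) (π / 2, φ₀ s) :=
      ((cd_Γθθφ hr).contDiffAt (isOpen_Udom.mem_nhds hUs)).differentiableAt (by simp)
    have hΓCd : DifferentiableAt ℝ (fun z : ℝ × ℝ => Γθφφ r z.1 z.2) (π / 2, φ₀ s) :=
      ((cd_Γθφφ hr).contDiffAt (isOpen_Udom.mem_nhds hUs)).differentiableAt (by simp)
    have hΓA' : HasFDerivAt (fun z : ℝ × ℝ => Γθθθ r z.1 z.2)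
        (fderiv ℝ (fun z : ℝ × ℝ => Γθθθ r z.1 z.2) (π / 2, φ₀ s))
        ((Θ (s, 0), Φ (s, 0))) := by rw [hbase0]; exact hΓAd.hasFDerivAt
    have hΓB' : HasFDerivAt (fun z : ℝ × ℝ => Γθθφ r z.1 z.2)
        (fderiv ℝ (fun z : ℝ × ℝ => Γθθφ r z.1 z.2) (π / 2, φ₀ s))
        ((Θ (s, 0), Φ (s, 0))) := by rw [hbase0]; exact hΓBd.hasFDerivAt
    have hΓC' : HasFDerivAt (fun z : ℝ × ℝ => Γθφφ r z.1 z.2)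
        (fderiv ℝ (fun z : ℝ × ℝ => Γθφφ r z.1 z.2) (π / 2, φ₀ s))
        ((Θ (s, 0), Φ (s, 0))) := by rw [hbase0]; exact hΓCd.hasFDerivAt
    have hA : HasDerivAt (fun x => Γθθθ r (Θ (s, x)) (Φ (s, x)))
        (fderiv ℝ (fun z : ℝ × ℝ => Γθθθ r z.1 z.2) (π / 2, φ₀ s)
          ((fderiv ℝ Θ (s, 0) (0, 1), fderiv ℝ Φ (s, 0) (0, 1)))) 0 := by
      have h0 := hΓA'.comp_hasDerivAt 0 hpairlam
      simpa [Function.comp_def] using h0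
    have hB : HasDerivAt (fun x => Γθθφ r (Θ (s, x)) (Φ (s, x)))
        (fderiv ℝ (fun z : ℝ × ℝ => Γθθφ r z.1 z.2) (π / 2, φ₀ s)
          ((fderiv ℝ Θ (s, 0) (0, 1), fderiv ℝ Φ (s, 0) (0, 1)))) 0 := by
      have h0 := hΓB'.comp_hasDerivAt 0 hpairlam
      simpa [Function.comp_def] using h0
    have hC : HasDerivAt (fun x => Γθφφ r (Θ (s, x)) (Φ (s, x)))
        (fderiv ℝ (fun z : ℝ × ℝ => Γθφφ r z.1 z.2) (π / 2, φ₀ s)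
          ((fderiv ℝ Θ (s, 0) (0, 1), fderiv ℝ Φ (s, 0) (0, 1)))) 0 := by
      have h0 := hΓC'.comp_hasDerivAt 0 hpairlam
      simpa [Function.comp_def] using h0
    have hbig := (((hA.mul (hhlam.pow 2)).add
      (((hB.const_mul (2:ℝ)).mul hhlam).mul hklam)).add
      (hC.mul (hklam.pow 2))).neg
    have hGd0 : HasDerivAt (fun x => G (s, x)) (Gd (s, 0)) 0 := hGdlam (s, 0) hsR
    have hfinal := hGd0.unique hbig
    have hlinC : fderiv ℝ (fun z : ℝ × ℝ => Γθφφ r z.1 z.2) (π / 2, φ₀ s)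
        ((fderiv ℝ Θ (s, 0) (0, 1), fderiv ℝ Φ (s, 0) (0, 1)))
        = fderiv ℝ Θ (s, 0) (0, 1) * deriv (fun t => Γθφφ r t (φ₀ s)) (π / 2) := by
      have hsplit : ((fderiv ℝ Θ (s, 0) (0, 1), fderiv ℝ Φ (s, 0) (0, 1)) : ℝ × ℝ)
          = fderiv ℝ Θ (s, 0) (0, 1) • (((1:ℝ), (0:ℝ)) : ℝ × ℝ)
            + fderiv ℝ Φ (s, 0) (0, 1) • (((0:ℝ), (1:ℝ)) : ℝ × ℝ) := by
        simp [Prod.ext_iff]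
      rw [hsplit, map_add, map_smul, map_smul]
      have h10 : fderiv ℝ (fun z : ℝ × ℝ => Γθφφ r z.1 z.2) (π / 2, φ₀ s) (1, 0)
          = deriv (fun t => Γθφφ r t (φ₀ s)) (π / 2) := (pθ_eq_fderiv hΓCd).symm
      have h01 : fderiv ℝ (fun z : ℝ × ℝ => Γθφφ r z.1 z.2) (π / 2, φ₀ s) (0, 1) = 0 := by
        rw [← pφ_eq_fderiv hΓCd]
        show deriv (fun x => Γθφφ r (π / 2) x) (φ₀ s) = 0
        have hz : (fun x => Γθφφ r (π / 2) x) = fun _ => (0:ℝ) :=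
          funext fun x => Γθφφ_zero hr hsym x
        rw [hz, deriv_const']
      rw [h10, h01]
      simp [smul_eq_mul]
    simp only [Pi.pow_apply, Pi.mul_apply] at hfinal
    rw [hbθ s hs, hbφ s hs, hhm0 s hs, hkm0 s hs, hlinC, Γθφφ_zero hr hsym (φ₀ s)] at hfinal
    rw [hfinal]
    ring
  -- assemble
  have hLHS : deriv (deriv ξ) s = Gd (s, 0) := by
    have hev : deriv ξ =ᶠ[nhds s] ξd := by
      filter_upwards [hI.mem_nhds hs] with u hu using (hξ'I u hu).deriv
    rw [Filter.EventuallyEq.deriv_eq hev]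
    exact hds.deriv
  rw [hLHS, hval]
  have e1 : deriv (fun lam => θf s lam) 0 = fderiv ℝ Θ (s, 0) (0, 1) := hξ_eq s hs
  have e2 : deriv ξ s = ξd s := (hξ'I s hs).deriv
  rw [e1, e2]
end
end
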